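/- Let H = {x ∈ ℝⁿ : ⟨α, x⟩ = 0 for some α ∈ A} be a finite real hyperplane arrangement with A a finite set of nonzero vectors. Let ℍ = {r e^{iπφ} : r > 0, 0 < φ ≤ 1} ⊆ ℂ be the semi-closed upper half-plane, and ℍ₊ = {∑ a_j e_j : a_j ∈ ℍ} ⊆ ℂⁿ. Suppose φ : ℝⁿ → ℝⁿ is an invertible linear map (extended ℂ-linearly to ℂⁿ) such that the image of the positive orthant C₊ = {∑ θ_j e_j : θ_j > 0} under φ is a chamber of H (a connected component of ℝⁿ \ H). Then φ(ℍ₊) ⊆ ℂⁿ \ H_ℂ, where H_ℂ = ⋃_{α ∈ A} {z ∈ ℂⁿ : ⟨α, z⟩ = 0}. -/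

import Mathlib

/-!
Write `z = x + i y` with `x, y` real. If `⟨α, φ z⟩ = 0`, then both `⟨α, φ x⟩` and `⟨α, φ y⟩`
vanish, hence so does `⟨α, φ (y - t x)⟩` for every real `t`. Each coordinate of `z` lies in
the semi-closed upper half-plane, so `y - t x` lies in the open positive orthant for small
`t > 0`; then `φ (y - t x)` lies in the chamber, which avoids the hyperplane `α = 0`.
-/

open Complex Filter Topology

lemma eventually_im_sub_mul_re_pos {w : ℂ} (hw : 0 < w.im ∨ (w.im = 0 ∧ w.re < 0)) :
    ∀ᶠ t in 𝓝[>] (0 : ℝ), 0 < w.im - t * w.re := by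
  rcases hw with him | ⟨him, hre⟩
  · have hlim : Tendsto (fun t : ℝ => w.im - t * w.re) (𝓝 0) (𝓝 w.im) :=
      (continuous_const.sub (continuous_id.mul continuous_const)).tendsto' 0 _ (by simp)
    exact (hlim.eventually (lt_mem_nhds him)).filter_mono nhdsWithin_le_nhds
  · filter_upwards [self_mem_nhdsWithin] with t (ht : 0 < t)
    rw [him]
    nlinarith [mul_neg_of_pos_of_neg ht hre]

lemma exists_pos_forall_im_sub_mul_re_pos {ι : Type*} [Finite ι] {z : ι → ℂ}
    (hz : ∀ j, 0 < (z j).im ∨ ((z j).im = 0 ∧ (z j).re < 0)) :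
    ∃ t : ℝ, 0 < t ∧ ∀ j, 0 < (z j).im - t * (z j).re := by
  obtain ⟨t, ht, hpos⟩ :=
    ((eventually_all.2 fun j => eventually_im_sub_mul_re_pos (hz j)).and
      self_mem_nhdsWithin).exists
  exact ⟨t, hpos, ht⟩

lemma sum_ofReal_mul_apply_eq {ι : Type*} [Fintype ι]
    (φC : (ι → ℂ) →ₗ[ℂ] (ι → ℂ)) (φR : (ι → ℝ) →ₗ[ℝ] (ι → ℝ))
    (hcompat : ∀ x : ι → ℝ, φC (fun j => (x j : ℂ)) = fun j => (φR x j : ℂ))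
    (α : ι → ℝ) (z : ι → ℂ) :
    ∑ j, (α j : ℂ) * φC z j =
      ((∑ j, α j * φR (fun j => (z j).re) j : ℝ) : ℂ) +
        ((∑ j, α j * φR (fun j => (z j).im) j : ℝ) : ℂ) * I := by
  have hz : z = (fun j => ((z j).re : ℂ)) + I • fun j => ((z j).im : ℂ) := by
    funext j
    simp [mul_comm I, re_add_im]
  conv_lhs => rw [hz, map_add, map_smul, hcompat, hcompat]
  simp only [Pi.add_apply, Pi.smul_apply, smul_eq_mul, ofReal_sum, ofReal_mul, Finset.sum_mul,
    ← Finset.sum_add_distrib]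
  exact Finset.sum_congr rfl fun j _ => by ring

theorem chamber_image_avoids_complexified_hyperplanes_general (n : ℕ)
    (A : Finset (Fin n → ℝ))
    (φC : (Fin n → ℂ) ≃ₗ[ℂ] (Fin n → ℂ))
    (φR : (Fin n → ℝ) ≃ₗ[ℝ] (Fin n → ℝ))
    (hcompat : ∀ x : Fin n → ℝ, φC (fun j => (x j : ℂ)) = fun j => (φR x j : ℂ))
    -- the image of the positive orthant under `φR` is a chamber, i.e. a connected
    -- component of the complement of the arrangement
    (hchamber : ∃ x₀ ∈ φR '' {x : Fin n → ℝ | ∀ j, 0 < x j},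
      φR '' {x : Fin n → ℝ | ∀ j, 0 < x j} =
        connectedComponentIn {x : Fin n → ℝ | ∀ α ∈ A, ∑ j, α j * x j ≠ 0} x₀) :
    ∀ z : Fin n → ℂ,
      (∀ j, 0 < (z j).im ∨ ((z j).im = 0 ∧ (z j).re < 0)) →
      ∀ α ∈ A, ∑ j, (α j : ℂ) * φC z j ≠ 0 := by
  intro z hz α hα hzero
  obtain ⟨x₀, -, hch⟩ := hchamber
  obtain ⟨t, -, hpos⟩ := exists_pos_forall_im_sub_mul_re_pos hz
  set x : Fin n → ℝ := fun j => (z j).re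
  set y : Fin n → ℝ := fun j => (z j).im
  replace hzero :=
    (sum_ofReal_mul_apply_eq φC.toLinearMap φR.toLinearMap hcompat α z).symm.trans hzero
  have hx : ∑ j, α j * φR x j = 0 := by simpa using congrArg re hzero
  have hy : ∑ j, α j * φR y j = 0 := by simpa using congrArg im hzero
  have hchamber_mem : φR (y - t • x) ∈ φR '' {x | ∀ j, 0 < x j} := ⟨_, hpos, rfl⟩
  rw [hch] at hchamber_mem
  refine connectedComponentIn_subset _ _ hchamber_mem α hα ?_
  simp only [map_sub, map_smul, Pi.sub_apply, Pi.smul_apply, smul_eq_mul, mul_sub,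
    Finset.sum_sub_distrib, mul_left_comm _ t, ← Finset.mul_sum, hx, hy, mul_zero, sub_zero]

/-- If an invertible linear map `φ` (defined over `ℝ`, extended `ℂ`-linearly) sends
the positive orthant onto a chamber of a real hyperplane arrangement, then `φ`
sends the region `ℍ₊` (coordinatewise semi-closed upper half-plane) into the
complexified complement of the arrangement. -/
theorem chamber_image_avoids_complexified_hyperplanes (n : ℕ) (hn : 1 ≤ n)
    (A : Finset (Fin n → ℝ)) (hA : ∀ α ∈ A, α ≠ 0)
    (φC : (Fin n → ℂ) ≃ₗ[ℂ] (Fin n → ℂ))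
    (φR : (Fin n → ℝ) ≃ₗ[ℝ] (Fin n → ℝ))
    (hcompat : ∀ x : Fin n → ℝ, φC (fun j => (x j : ℂ)) = fun j => (φR x j : ℂ))
    -- the image of the positive orthant under `φR` is a chamber, i.e. a connected
    -- component of the complement of the arrangement
    (hchamber : ∃ x₀ ∈ φR '' {x : Fin n → ℝ | ∀ j, 0 < x j},
      φR '' {x : Fin n → ℝ | ∀ j, 0 < x j} =
        connectedComponentIn {x : Fin n → ℝ | ∀ α ∈ A, ∑ j, α j * x j ≠ 0} x₀) :
    ∀ z : Fin n → ℂ,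
      (∀ j, 0 < (z j).im ∨ ((z j).im = 0 ∧ (z j).re < 0)) →
      ∀ α ∈ A, ∑ j, (α j : ℂ) * φC z j ≠ 0 :=
  chamber_image_avoids_complexified_hyperplanes_general n A φC φR hcompat hchamber
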